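/- Commutation of substitution with unwrapping: if t, v̄₁, v̄₂ are (well-formed) terms/value-tuples of λ_int with fv(t) ⊆ x̄ ∪ ȳ (x̄, ȳ disjoint), then the unwrapping of the simultaneous substitution equals the substitution of the unwrappings: ⌊t[x̄:=v̄₁, ȳ:=v̄₂]⌋ = ⌊t⌋[x̄:=⌊v̄₁⌋][ȳ:=⌊v̄₂⌋]. -/

import Mathlib

set_option linter.unusedVariables false

namespace CC

/-- Terms of the source calculus λ_sou (de Bruijn indices, multi-binders). -/
inductive STm : Type
| var : Nat → STm
| lam : Nat → STm → STm
| app : STm → STm → STm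
| proj : Nat → STm → STm
| tup : List STm → STm

instance : Inhabited STm := ⟨.var 0⟩

namespace STm

/-- Size of a source term. -/
def size : STm → Nat
| var _ => 1
| lam n t => t.size + n + 1
| app t u => t.size + u.size + 1
| proj _ t => t.size + 1
| tup ts => ts.length + (ts.attach.map (fun ⟨a, ha⟩ => a.size)).sum
decreasing_by all_goals first
  | (have := List.sizeOf_lt_of_mem ha; omega)
  | decreasing_tactic

/-- Renaming of free de Bruijn indices. -/
def rename (ρ : Nat → Nat) : STm → STm
| var i => var (ρ i)
| lam n t => lam n (t.rename (fun i => if i < n then i else ρ (i - n) + n))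
| app t u => app (t.rename ρ) (u.rename ρ)
| proj i t => proj i (t.rename ρ)
| tup ts => tup (ts.attach.map (fun ⟨a, ha⟩ => a.rename ρ))
decreasing_by all_goals first
  | (have := List.sizeOf_lt_of_mem ha; omega)
  | decreasing_tactic

/-- Parallel substitution. -/
def subst (σ : Nat → STm) : STm → STm
| var i => σ i
| lam n t => lam n (t.subst (fun i => if i < n then var i else (σ (i - n)).rename (· + n)))
| app t u => app (t.subst σ) (u.subst σ)
| proj i t => proj i (t.subst σ)
| tup ts => tup (ts.attach.map (fun ⟨a, ha⟩ => a.subst σ))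
decreasing_by all_goals first
  | (have := List.sizeOf_lt_of_mem ha; omega)
  | decreasing_tactic

/-- Simultaneous substitution of a list of terms for indices `0..vs.length-1`. -/
def substList (vs : List STm) (t : STm) : STm :=
  t.subst (fun i => if i < vs.length then vs.getD i default else var (i - vs.length))

end STm

/-- Values of λ_sou: (multi-variable) abstractions and tuples of values. -/
inductive SVal : STm → Prop
| lam {n t} : SVal (.lam n t)
| tup {vs} : (∀ v ∈ vs, SVal v) → SVal (.tup vs)

/-- All free de Bruijn indices of `t` are `< k`. `FB 0 t` means `t` is closed. -/
inductive SFB : Nat → STm → Prop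
| var {k i} : i < k → SFB k (.var i)
| lam {k n t} : SFB (k + n) t → SFB k (.lam n t)
| app {k t u} : SFB k t → SFB k u → SFB k (.app t u)
| proj {k i t} : SFB k t → SFB k (.proj i t)
| tup {k ts} : (∀ t ∈ ts, SFB k t) → SFB k (.tup ts)

/-- Labels for the two rewrite rules. -/
inductive Lab | beta | pi
deriving DecidableEq

/-- Labelled weak right-to-left call-by-value reduction of λ_sou,
root rules closed under evaluation contexts. -/
inductive SStepL : Lab → STm → STm → Prop
| beta {n t vs} : (∀ v ∈ vs, SVal v) → vs.length = n →
    SStepL .beta (.app (.lam n t) (.tup vs)) (STm.substList vs t)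
| proj {i vs} : (∀ v ∈ vs, SVal v) → i < vs.length →
    SStepL .pi (.proj i (.tup vs)) (vs.getD i default)
| appR {l t u u'} : SStepL l u u' → SStepL l (.app t u) (.app t u')
| appL {l v t t'} : SVal v → SStepL l t t' → SStepL l (.app t v) (.app t' v)
| projC {l i t t'} : SStepL l t t' → SStepL l (.proj i t) (.proj i t')
| tupC {l ts t t' vs} : (∀ v ∈ vs, SVal v) → SStepL l t t' →
    SStepL l (.tup (ts ++ t :: vs)) (.tup (ts ++ t' :: vs))

/-- The reduction →_sou. -/
def SStep (t u : STm) : Prop := ∃ l, SStepL l t u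

/-- Clashes of λ_sou: root clashes closed under evaluation contexts. -/
inductive SClash : STm → Prop
| rproj {i v} : SVal v → (∀ vs, v = .tup vs → vs.length ≤ i) → SClash (.proj i v)
| rapp {n t v} : SVal v → (∀ vs, v = .tup vs → vs.length ≠ n) → SClash (.app (.lam n t) v)
| rtup {rs s} : SClash (.app (.tup rs) s)
| cAppR {t u} : SClash u → SClash (.app t u)
| cAppL {t v} : SVal v → SClash t → SClash (.app t v)
| cProj {i t} : SClash t → SClash (.proj i t)
| cTup {ts t vs} : (∀ v ∈ vs, SVal v) → SClash t → SClash (.tup (ts ++ t :: vs))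

/-- Clash-freeness (coinductively: no reduct is a clash). -/
def SClashFree (t : STm) : Prop := ∀ u, Relation.ReflTransGen SStep t u → ¬ SClash u

/-- `k`-fold iteration of a reduction. -/
def iterRel {α : Type _} (R : α → α → Prop) : Nat → α → α → Prop
| 0, t, u => t = u
| (k+1), t, u => ∃ s, R t s ∧ iterRel R k s u

end CC

namespace CC

/-- Terms of the intermediate calculus λ_int: abstractions are replaced by
closures `clo n m body bag` binding `n` wrapped variables ȳ (indices `m..m+n-1`
of the body) and `m` source variables x̄ (indices `0..m-1` of the body),
with a bag of `n` terms. -/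
inductive ITm : Type
| var : Nat → ITm
| app : ITm → ITm → ITm
| proj : Nat → ITm → ITm
| tup : List ITm → ITm
| clo : Nat → Nat → ITm → List ITm → ITm

instance : Inhabited ITm := ⟨.var 0⟩

namespace ITm

/-- Renaming of free variables of a λ_int term: closure bodies are untouched
(there are no free variables in the body other than the closure's own binders). -/
def irename (ρ : Nat → Nat) : ITm → ITm
| var i => var (ρ i)
| app t u => app (t.irename ρ) (u.irename ρ)
| proj i t => proj i (t.irename ρ)
| tup ts => tup (ts.attach.map (fun ⟨a, ha⟩ => a.irename ρ))
| clo n m body bag => clo n m body (bag.attach.map (fun ⟨a, ha⟩ => a.irename ρ))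
decreasing_by all_goals first
  | (have := List.sizeOf_lt_of_mem ha; omega)
  | decreasing_tactic

/-- Simultaneous substitution of the terms `vs` for the free variables
`0..vs.length-1` of a λ_int term (shifting the remaining ones down);
it goes into bags but leaves closure bodies untouched. -/
def isubst (vs : List ITm) : ITm → ITm
| var i => if i < vs.length then vs.getD i default else var (i - vs.length)
| app t u => app (t.isubst vs) (u.isubst vs)
| proj i t => proj i (t.isubst vs)
| tup ts => tup (ts.attach.map (fun ⟨a, ha⟩ => a.isubst vs))
| clo n m body bag => clo n m body (bag.attach.map (fun ⟨a, ha⟩ => a.isubst vs))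
decreasing_by all_goals first
  | (have := List.sizeOf_lt_of_mem ha; omega)
  | decreasing_tactic

/-- Size of a λ_int term (counting bags and binder sequences). -/
def isize : ITm → Nat
| var _ => 1
| app t u => t.isize + u.isize + 1
| proj _ t => t.isize + 1
| tup ts => ts.length + (ts.attach.map (fun ⟨a, ha⟩ => a.isize)).sum
| clo n m body bag =>
    body.isize + n + m + 1 + bag.length + (bag.attach.map (fun ⟨a, ha⟩ => a.isize)).sum
decreasing_by all_goals first
  | (have := List.sizeOf_lt_of_mem ha; omega)
  | decreasing_tactic

end ITm

/-- Values of λ_int: closures (with a variable bag or with an evaluated bag)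
and tuples of values. -/
inductive IVal : ITm → Prop
| cloV {n m t bag} : (∀ b ∈ bag, ∃ i, b = ITm.var i) → IVal (.clo n m t bag)
| cloE {n m t bag} : (∀ b ∈ bag, IVal b) → IVal (.clo n m t bag)
| tup {vs} : (∀ v ∈ vs, IVal v) → IVal (.tup vs)

/-- All free variables of a λ_int term are `< k` (`IFB 0 t`: `t` is closed). -/
inductive IFB : Nat → ITm → Prop
| var {k i} : i < k → IFB k (.var i)
| app {k t u} : IFB k t → IFB k u → IFB k (.app t u)
| proj {k i t} : IFB k t → IFB k (.proj i t)
| tup {k ts} : (∀ t ∈ ts, IFB k t) → IFB k (.tup ts)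
| clo {k n m body bag} : (∀ b ∈ bag, IFB k b) → IFB (n + m + k) body →
    IFB k (.clo n m body bag)

/-- Well-formed λ_int terms: every closure `clo n m body bag` satisfies
`|bag| = n`, its body is closed by the binders (fv(body) ⊆ ȳ ∪ x̄), and the bag
is either a bag of variables or a bag of values. -/
inductive IWF : ITm → Prop
| var {i} : IWF (.var i)
| app {t u} : IWF t → IWF u → IWF (.app t u)
| proj {i t} : IWF t → IWF (.proj i t)
| tup {ts} : (∀ t ∈ ts, IWF t) → IWF (.tup ts)
| cloV {n m body bag} : bag.length = n → IFB (n + m) body →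
    (∀ b ∈ bag, ∃ i, b = ITm.var i) → IWF body → IWF (.clo n m body bag)
| cloE {n m body bag} : bag.length = n → IFB (n + m) body →
    (∀ b ∈ bag, IVal b) → (∀ b ∈ bag, IWF b) → IWF body → IWF (.clo n m body bag)

/-- Prime λ_int terms: all closures are variable closures. -/
inductive IPrime : ITm → Prop
| var {i} : IPrime (.var i)
| app {t u} : IPrime t → IPrime u → IPrime (.app t u)
| proj {i t} : IPrime t → IPrime (.proj i t)
| tup {ts} : (∀ t ∈ ts, IPrime t) → IPrime (.tup ts)
| clo {n m body bag} : (∀ b ∈ bag, ∃ i, b = ITm.var i) → IPrime body →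
    IPrime (.clo n m body bag)

/-- Labelled reduction of λ_int: the root rules `iβv` (the closure's bag is
substituted for ȳ and the argument tuple for x̄, simultaneously) and `iπ`,
closed under evaluation contexts (which do not enter closures). -/
inductive IStepL : Lab → ITm → ITm → Prop
| beta {n m body bag vs} : (∀ b ∈ bag, IVal b) → (∀ v ∈ vs, IVal v) →
    bag.length = n → vs.length = m →
    IStepL .beta (.app (.clo n m body bag) (.tup vs)) (ITm.isubst (vs ++ bag) body)
| proj {i vs} : (∀ v ∈ vs, IVal v) → i < vs.length →
    IStepL .pi (.proj i (.tup vs)) (vs.getD i default)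
| appR {l t u u'} : IStepL l u u' → IStepL l (.app t u) (.app t u')
| appL {l v t t'} : IVal v → IStepL l t t' → IStepL l (.app t v) (.app t' v)
| projC {l i t t'} : IStepL l t t' → IStepL l (.proj i t) (.proj i t')
| tupC {l ts t t' vs} : (∀ v ∈ vs, IVal v) → IStepL l t t' →
    IStepL l (.tup (ts ++ t :: vs)) (.tup (ts ++ t' :: vs))

/-- The reduction →_int. -/
def IStep (t u : ITm) : Prop := ∃ l, IStepL l t u

/-- Clashes of λ_int: root clashes closed under evaluation contexts. -/
inductive IClash : ITm → Prop
| rproj {i v} : IVal v → (∀ vs, v = .tup vs → vs.length ≤ i) → IClash (.proj i v)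
| rapp {n m body bag v} : IVal v → (∀ vs, v = .tup vs → vs.length ≠ m) →
    IClash (.app (.clo n m body bag) v)
| rtup {rs s} : IClash (.app (.tup rs) s)
| cAppR {t u} : IClash u → IClash (.app t u)
| cAppL {t v} : IVal v → IClash t → IClash (.app t v)
| cProj {i t} : IClash t → IClash (.proj i t)
| cTup {ts t vs} : (∀ v ∈ vs, IVal v) → IClash t → IClash (.tup (ts ++ t :: vs))

/-- Clash-freeness for λ_int. -/
def IClashFree (t : ITm) : Prop := ∀ u, Relation.ReflTransGen IStep t u → ¬ IClash u

/-- The wrapping translation ⌈·⌉ : λ_sou → λ_int: every abstraction `λx̄.t` with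
free variables ȳ becomes the variable closure `[λȳ.λx̄.⌈t⌉, ⟨ȳ⟩]`; homomorphic
on the other constructors. -/
def STm.fvs : STm → Finset Nat
| .var i => {i}
| .lam n t => (t.fvs.filter (· ≥ n)).image (· - n)
| .app t u => t.fvs ∪ u.fvs
| .proj _ t => t.fvs
| .tup ts => ts.attach.foldr (fun ⟨a, ha⟩ acc => a.fvs ∪ acc) ∅
decreasing_by all_goals first
  | (have := List.sizeOf_lt_of_mem ha; omega)
  | decreasing_tactic

def STm.wrap : STm → ITm
| .var i => .var i
| .app t u => .app t.wrap u.wrap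
| .proj i t => .proj i t.wrap
| .tup ts => .tup (ts.attach.map (fun ⟨a, ha⟩ => a.wrap))
| .lam n t =>
    let ys : List Nat := (((t.fvs.filter (· ≥ n)).image (· - n)).sort (· ≤ ·))
    .clo ys.length n
      (t.wrap.irename (fun j => if j < n then j else n + (ys.idxOf (j - n))))
      (ys.map (fun j => ITm.var j))
decreasing_by all_goals first
  | (have := List.sizeOf_lt_of_mem ha; omega)
  | decreasing_tactic

/-- The unwrapping translation ⌊·⌋ : λ_int → λ_sou: substitutes the (unwrapped)
bag of each closure for its wrapped variables ȳ; on a variable closure with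
bag ⟨ȳ⟩ this gives `λx̄.⌊body⌋` with the ȳ free. -/
def ITm.unwrap : ITm → STm
| .var i => .var i
| .app t u => .app t.unwrap u.unwrap
| .proj i t => .proj i t.unwrap
| .tup ts => .tup (ts.attach.map (fun ⟨a, ha⟩ => a.unwrap))
| .clo n m body bag =>
    let ub : List STm := bag.attach.map (fun ⟨a, ha⟩ => a.unwrap)
    .lam m (body.unwrap.subst (fun i =>
      if i < m then .var i
      else if i < m + n then (ub.getD (i - m) default).rename (· + m)
      else .var (i - n)))
decreasing_by all_goals first
  | (have := List.sizeOf_lt_of_mem ha; omega)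
  | decreasing_tactic

end CC

namespace CC

theorem attach_map' {α β : Type _} (l : List α) (f : α → β) :
    l.attach.map (fun ⟨a, ha⟩ => f a) = l.map f := List.attach_map_val (l := l) (f := f)

theorem getD_map' {α β : Type _} [Inhabited α] [Inhabited β] (f : α → β) (l : List α)
    (i : Nat) (h : i < l.length) :
    (l.map f).getD i default = f (l.getD i default) := by
  rw [List.getD_eq_getElem _ _ (by simpa using h), List.getD_eq_getElem _ _ h,
    List.getElem_map]

theorem getD_mem' {α : Type _} [Inhabited α] (l : List α) (i : Nat) (h : i < l.length) :
    l.getD i default ∈ l := by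
  rw [List.getD_eq_getElem _ _ h]; exact List.getElem_mem h

namespace STm

/-- Lifting of a renaming under `n` binders. -/
def liftR (n : Nat) (ρ : Nat → Nat) : Nat → Nat := fun i => if i < n then i else ρ (i - n) + n

/-- Lifting of a substitution under `n` binders. -/
def lift (n : Nat) (σ : Nat → STm) : Nat → STm :=
  fun i => if i < n then var i else (σ (i - n)).rename (· + n)

/-- The substitution function associated to `substList vs`. -/
def sig (vs : List STm) : Nat → STm :=
  fun i => if i < vs.length then vs.getD i default else var (i - vs.length)

@[simp] theorem rename_var (ρ : Nat → Nat) (i : Nat) : (var i).rename ρ = var (ρ i) := by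
  rw [rename]

@[simp] theorem rename_lam (ρ : Nat → Nat) (n : Nat) (t : STm) :
    (lam n t).rename ρ = lam n (t.rename (liftR n ρ)) := by rw [rename]; rfl

@[simp] theorem rename_app (ρ : Nat → Nat) (t u : STm) :
    (app t u).rename ρ = app (t.rename ρ) (u.rename ρ) := by rw [rename]

@[simp] theorem rename_proj (ρ : Nat → Nat) (i : Nat) (t : STm) :
    (proj i t).rename ρ = proj i (t.rename ρ) := by rw [rename]

@[simp] theorem rename_tup (ρ : Nat → Nat) (ts : List STm) :
    (tup ts).rename ρ = tup (ts.map (rename ρ)) := by rw [rename, attach_map']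

@[simp] theorem subst_var (σ : Nat → STm) (i : Nat) : (var i).subst σ = σ i := by
  rw [subst]

@[simp] theorem subst_lam (σ : Nat → STm) (n : Nat) (t : STm) :
    (lam n t).subst σ = lam n (t.subst (lift n σ)) := by rw [subst]; rfl

@[simp] theorem subst_app (σ : Nat → STm) (t u : STm) :
    (app t u).subst σ = app (t.subst σ) (u.subst σ) := by rw [subst]

@[simp] theorem subst_proj (σ : Nat → STm) (i : Nat) (t : STm) :
    (proj i t).subst σ = proj i (t.subst σ) := by rw [subst]

@[simp] theorem subst_tup (σ : Nat → STm) (ts : List STm) :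
    (tup ts).subst σ = tup (ts.map (subst σ)) := by rw [subst, attach_map']

theorem substList_def (vs : List STm) (t : STm) : substList vs t = t.subst (sig vs) := rfl

/-- Custom structural induction for `STm`. -/
theorem indOn {P : STm → Prop}
    (hv : ∀ i, P (var i))
    (hl : ∀ n t, P t → P (lam n t))
    (ha : ∀ t u, P t → P u → P (app t u))
    (hp : ∀ i t, P t → P (proj i t))
    (ht : ∀ ts, (∀ t ∈ ts, P t) → P (tup ts)) : ∀ t, P t := by
  have H : ∀ k t, sizeOf t ≤ k → P t := by
    intro k
    induction k with
    | zero => intro t h; cases t <;> (simp at h; try omega)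
    | succ k ih =>
      intro t h
      cases t with
      | var i => exact hv i
      | lam n t => exact hl n t (ih t (by simp at h; omega))
      | app t u => exact ha t u (ih t (by simp at h; omega)) (ih u (by simp at h; omega))
      | proj i t => exact hp i t (ih t (by simp at h; omega))
      | tup ts =>
        refine ht ts (fun a ha' => ih a ?_)
        have := List.sizeOf_lt_of_mem ha'
        simp at h; omega
  exact fun t => H (sizeOf t) t le_rfl

theorem rename_rename (t : STm) : ∀ (ρ ρ' : Nat → Nat),
    (t.rename ρ).rename ρ' = t.rename (fun i => ρ' (ρ i)) := by
  induction t using indOn with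
  | hv i => intro ρ ρ'; simp
  | hl n t ih =>
    intro ρ ρ'
    have hA : (fun i => liftR n ρ' (liftR n ρ i)) = liftR n (fun i => ρ' (ρ i)) := by
      funext i
      unfold liftR
      by_cases h : i < n
      · simp [h]
      · rw [if_neg h, if_neg (by omega), if_neg h, Nat.add_sub_cancel]
    simp only [rename_lam, ih, hA]
  | ha t u iht ihu => intro ρ ρ'; simp [iht, ihu]
  | hp i t ih => intro ρ ρ'; simp [ih]
  | ht ts ih =>
    intro ρ ρ'
    simp only [rename_tup, List.map_map]
    exact congrArg tup (List.map_congr_left fun a ha => ih a ha ρ ρ')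

theorem subst_rename (t : STm) : ∀ (ρ : Nat → Nat) (σ : Nat → STm),
    (t.rename ρ).subst σ = t.subst (fun i => σ (ρ i)) := by
  induction t using indOn with
  | hv i => intro ρ σ; simp
  | hl n t ih =>
    intro ρ σ
    have hA : (fun i => lift n σ (liftR n ρ i)) = lift n (fun i => σ (ρ i)) := by
      funext i
      unfold liftR lift
      by_cases h : i < n
      · simp [h]
      · rw [if_neg h, if_neg (by omega), if_neg h, Nat.add_sub_cancel]
    simp only [rename_lam, subst_lam, ih, hA]
  | ha t u iht ihu => intro ρ σ; simp [iht, ihu]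
  | hp i t ih => intro ρ σ; simp [ih]
  | ht ts ih =>
    intro ρ σ
    simp only [rename_tup, subst_tup, List.map_map]
    exact congrArg tup (List.map_congr_left fun a ha => ih a ha ρ σ)

theorem rename_subst (t : STm) : ∀ (σ : Nat → STm) (ρ : Nat → Nat),
    (t.subst σ).rename ρ = t.subst (fun i => (σ i).rename ρ) := by
  induction t using indOn with
  | hv i => intro σ ρ; simp
  | hl n t ih =>
    intro σ ρ
    have hA : (fun i => (lift n σ i).rename (liftR n ρ)) = lift n (fun i => (σ i).rename ρ) := by
      funext i
      unfold lift
      by_cases h : i < n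
      · simp [h, liftR]
      · rw [if_neg h, if_neg h, rename_rename, rename_rename]
        congr 1
        funext j
        unfold liftR
        rw [if_neg (by omega), Nat.add_sub_cancel]
    simp only [subst_lam, rename_lam, ih, hA]
  | ha t u iht ihu => intro σ ρ; simp [iht, ihu]
  | hp i t ih => intro σ ρ; simp [ih]
  | ht ts ih =>
    intro σ ρ
    simp only [subst_tup, rename_tup, List.map_map]
    exact congrArg tup (List.map_congr_left fun a ha => ih a ha σ ρ)

theorem subst_subst (t : STm) : ∀ (σ τ : Nat → STm),
    (t.subst σ).subst τ = t.subst (fun i => (σ i).subst τ) := by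
  induction t using indOn with
  | hv i => intro σ τ; simp
  | hl n t ih =>
    intro σ τ
    have hA : (fun i => (lift n σ i).subst (lift n τ)) = lift n (fun i => (σ i).subst τ) := by
      funext i
      by_cases h : i < n
      · simp [lift, h]
      · show (lift n σ i).subst (lift n τ) = _
        unfold lift
        rw [if_neg h, if_neg h, subst_rename, rename_subst]
        have : (fun j => if j + n < n then var (j + n) else (τ (j + n - n)).rename (· + n))
            = (fun j => (τ j).rename (· + n)) := by
          funext j
          rw [if_neg (by omega), Nat.add_sub_cancel]
        rw [this]
    simp only [subst_lam, ih, hA]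
  | ha t u iht ihu => intro σ τ; simp [iht, ihu]
  | hp i t ih => intro σ τ; simp [ih]
  | ht ts ih =>
    intro σ τ
    simp only [subst_tup, List.map_map]
    exact congrArg tup (List.map_congr_left fun a ha => ih a ha σ τ)

theorem subst_id (t : STm) : t.subst var = t := by
  induction t using indOn with
  | hv i => simp
  | hl n t ih =>
    simp only [subst_lam]
    congr 1
    have : lift n var = var := by
      funext i
      unfold lift
      by_cases h : i < n
      · simp [h]
      · rw [if_neg h, rename_var]
        congr 1; omega
    rw [this, ih]
  | ha t u iht ihu => simp [iht, ihu]
  | hp i t ih => simp [ih]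
  | ht ts ih =>
    simp only [subst_tup]
    have : ts.map (subst var) = ts.map id := List.map_congr_left (fun a ha => ih a ha)
    rw [this, List.map_id]

theorem subst_eq_on {k : Nat} {t : STm} (h : SFB k t) :
    ∀ {σ τ : Nat → STm}, (∀ i < k, σ i = τ i) → t.subst σ = t.subst τ := by
  induction h with
  | var hik => intro σ τ hst; simp [hst _ hik]
  | @lam k n t _ ih =>
    intro σ τ hst
    simp only [subst_lam]
    rw [ih (fun i hi => ?_)]
    unfold lift
    by_cases h : i < n
    · rw [if_pos h, if_pos h]
    · rw [if_neg h, if_neg h, hst (i - n) (by omega)]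
  | app _ _ iht ihu => intro σ τ hst; simp [iht hst, ihu hst]
  | proj _ ih => intro σ τ hst; simp [ih hst]
  | tup _ ih =>
    intro σ τ hst
    simp only [subst_tup]
    exact congrArg tup (List.map_congr_left fun a ha => ih a ha hst)

theorem subst_closed {k : Nat} {t : STm} (h : SFB k t) {σ : Nat → STm}
    (hσ : ∀ i < k, σ i = var i) : t.subst σ = t := by
  rw [subst_eq_on h hσ, subst_id]

theorem SFB_rename {k : Nat} {t : STm} (h : SFB k t) :
    ∀ {k' : Nat} {ρ : Nat → Nat}, (∀ i < k, ρ i < k') → SFB k' (t.rename ρ) := by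
  induction h with
  | var hik => intro k' ρ hρ; rw [rename_var]; exact SFB.var (hρ _ hik)
  | @lam k n t _ ih =>
    intro k' ρ hρ
    rw [rename_lam]
    refine SFB.lam (ih fun i hi => ?_)
    unfold liftR
    by_cases h : i < n
    · rw [if_pos h]; omega
    · rw [if_neg h]
      have := hρ (i - n) (by omega)
      omega
  | app _ _ iht ihu => intro k' ρ hρ; rw [rename_app]; exact SFB.app (iht hρ) (ihu hρ)
  | proj _ ih => intro k' ρ hρ; rw [rename_proj]; exact SFB.proj (ih hρ)
  | tup _ ih =>
    intro k' ρ hρ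
    rw [rename_tup]
    exact SFB.tup (fun s hs => by
      obtain ⟨a, ha, rfl⟩ := List.mem_map.1 hs
      exact ih a ha hρ)

theorem SFB_subst {k : Nat} {t : STm} (h : SFB k t) :
    ∀ {k' : Nat} {σ : Nat → STm}, (∀ i < k, SFB k' (σ i)) → SFB k' (t.subst σ) := by
  induction h with
  | var hik => intro k' σ hσ; rw [subst_var]; exact hσ _ hik
  | @lam k n t _ ih =>
    intro k' σ hσ
    rw [subst_lam]
    refine SFB.lam (ih fun i hi => ?_)
    unfold lift
    by_cases h : i < n
    · rw [if_pos h]; exact SFB.var (by omega)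
    · rw [if_neg h]
      exact SFB_rename (hσ (i - n) (by omega)) (fun j hj => by omega)
  | app _ _ iht ihu => intro k' σ hσ; rw [subst_app]; exact SFB.app (iht hσ) (ihu hσ)
  | proj _ ih => intro k' σ hσ; rw [subst_proj]; exact SFB.proj (ih hσ)
  | tup _ ih =>
    intro k' σ hσ
    rw [subst_tup]
    exact SFB.tup (fun s hs => by
      obtain ⟨a, ha, rfl⟩ := List.mem_map.1 hs
      exact ih a ha hσ)

/-- Commuting a shift with a lifted substitution. -/
theorem shift_subst (s : STm) (σ : Nat → STm) (m : Nat) :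
    (s.rename (· + m)).subst (lift m σ) = (s.subst σ).rename (· + m) := by
  rw [subst_rename, rename_subst]
  congr 1
  funext i
  unfold lift
  rw [if_neg (by omega), Nat.add_sub_cancel]

end STm

namespace ITm

@[simp] theorem isubst_var (vs : List ITm) (i : Nat) :
    (var i).isubst vs = if i < vs.length then vs.getD i default else var (i - vs.length) := by
  rw [isubst]

@[simp] theorem isubst_app (vs : List ITm) (t u : ITm) :
    (app t u).isubst vs = app (t.isubst vs) (u.isubst vs) := by rw [isubst]

@[simp] theorem isubst_proj (vs : List ITm) (i : Nat) (t : ITm) :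
    (proj i t).isubst vs = proj i (t.isubst vs) := by rw [isubst]

@[simp] theorem isubst_tup (vs : List ITm) (ts : List ITm) :
    (tup ts).isubst vs = tup (ts.map (isubst vs)) := by rw [isubst, attach_map']

@[simp] theorem isubst_clo (vs : List ITm) (n m : Nat) (body : ITm) (bag : List ITm) :
    (clo n m body bag).isubst vs = clo n m body (bag.map (isubst vs)) := by
  rw [isubst, attach_map']

@[simp] theorem unwrap_var (i : Nat) : (var i).unwrap = .var i := by rw [unwrap]

@[simp] theorem unwrap_app (t u : ITm) : (app t u).unwrap = .app t.unwrap u.unwrap := by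
  rw [unwrap]

@[simp] theorem unwrap_proj (i : Nat) (t : ITm) : (proj i t).unwrap = .proj i t.unwrap := by
  rw [unwrap]

@[simp] theorem unwrap_tup (ts : List ITm) :
    (tup ts).unwrap = .tup (ts.map unwrap) := by rw [unwrap, attach_map']

/-- The substitution used by `unwrap` on a closure. -/
def cloSig (n m : Nat) (ub : List STm) : Nat → STm := fun i =>
  if i < m then .var i
  else if i < m + n then (ub.getD (i - m) default).rename (· + m)
  else .var (i - n)

theorem unwrap_clo (n m : Nat) (body : ITm) (bag : List ITm) :
    (clo n m body bag).unwrap = .lam m (body.unwrap.subst (cloSig n m (bag.map unwrap))) := by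
  rw [unwrap]
  show STm.lam m _ = _
  rw [attach_map']
  rfl

/-- Custom structural induction for `ITm`. -/
theorem indOn {P : ITm → Prop}
    (hv : ∀ i, P (var i))
    (ha : ∀ t u, P t → P u → P (app t u))
    (hp : ∀ i t, P t → P (proj i t))
    (ht : ∀ ts, (∀ t ∈ ts, P t) → P (tup ts))
    (hc : ∀ n m body bag, P body → (∀ b ∈ bag, P b) → P (clo n m body bag)) :
    ∀ t, P t := by
  have H : ∀ k t, sizeOf t ≤ k → P t := by
    intro k
    induction k with
    | zero => intro t h; cases t <;> (simp at h; try omega)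
    | succ k ih =>
      intro t h
      cases t with
      | var i => exact hv i
      | app t u => exact ha t u (ih t (by simp at h; omega)) (ih u (by simp at h; omega))
      | proj i t => exact hp i t (ih t (by simp at h; omega))
      | tup ts =>
        refine ht ts (fun a ha' => ih a ?_)
        have := List.sizeOf_lt_of_mem ha'
        simp at h; omega
      | clo n m body bag =>
        refine hc n m body bag (ih body (by simp at h; omega)) (fun b hb => ih b ?_)
        have := List.sizeOf_lt_of_mem hb
        simp at h; omega
  exact fun t => H (sizeOf t) t le_rfl

end ITm

theorem IWF_clo_inv {n m : Nat} {body : ITm} {bag : List ITm}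
    (h : IWF (.clo n m body bag)) :
    bag.length = n ∧ IFB (n + m) body ∧ (∀ b ∈ bag, IWF b) ∧ IWF body := by
  cases h with
  | cloV h1 h2 h3 h4 =>
    exact ⟨h1, h2, fun b hb => by obtain ⟨i, rfl⟩ := h3 b hb; exact IWF.var, h4⟩
  | cloE h1 h2 h3 h4 h5 => exact ⟨h1, h2, h4, h5⟩

/-- Unwrapping preserves the free-variable bound, for well-formed terms. -/
theorem unwrap_fb : ∀ (t : ITm) {k : Nat}, IWF t → IFB k t → SFB k t.unwrap := by
  intro t
  induction t using ITm.indOn with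
  | hv i =>
    intro k _ hfb
    cases hfb with | var h => rw [ITm.unwrap_var]; exact SFB.var h
  | ha t u iht ihu =>
    intro k hwf hfb
    cases hwf with | app hwt hwu =>
    cases hfb with | app hft hfu =>
    rw [ITm.unwrap_app]; exact SFB.app (iht hwt hft) (ihu hwu hfu)
  | hp i t ih =>
    intro k hwf hfb
    cases hwf with | proj hwt =>
    cases hfb with | proj hft =>
    rw [ITm.unwrap_proj]; exact SFB.proj (ih hwt hft)
  | ht ts ih =>
    intro k hwf hfb
    cases hwf with | tup hwt =>
    cases hfb with | tup hft =>
    rw [ITm.unwrap_tup]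
    exact SFB.tup (fun s hs => by
      obtain ⟨a, ha, rfl⟩ := List.mem_map.1 hs
      exact ih a ha (hwt a ha) (hft a ha))
  | hc n m body bag ihb ihbag =>
    intro k hwf hfb
    obtain ⟨hlen, _, hwfb, hwfbody⟩ := IWF_clo_inv hwf
    cases hfb with | clo hbagfb hbodyfb =>
    rw [ITm.unwrap_clo]
    refine SFB.lam (STm.SFB_subst (ihb hwfbody hbodyfb) fun i hi => ?_)
    unfold ITm.cloSig
    by_cases h1 : i < m
    · rw [if_pos h1]; exact SFB.var (by omega)
    · rw [if_neg h1]
      by_cases h2 : i < m + n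
      · rw [if_pos h2]
        have hlt : i - m < bag.length := by omega
        rw [getD_map' _ _ _ hlt]
        have hmem := getD_mem' bag (i - m) hlt
        exact STm.SFB_rename (ihbag _ hmem (hwfb _ hmem) (hbagfb _ hmem))
          (fun j hj => by omega)
      · rw [if_neg h2]
        exact SFB.var (by omega)

end CC

namespace CC

theorem unwrap_subst_commute_aux (vs1 vs2 : List ITm)
    (h1 : ∀ v ∈ vs1, IVal v ∧ IWF v ∧ IFB 0 v)
    (h2 : ∀ v ∈ vs2, IVal v ∧ IWF v ∧ IFB 0 v) :
    ∀ t : ITm, IWF t → IFB (vs1.length + vs2.length) t →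
      (ITm.isubst (vs1 ++ vs2) t).unwrap
        = STm.substList (vs2.map ITm.unwrap)
            (STm.substList (vs1.map ITm.unwrap) t.unwrap) := by
  set W1 := vs1.map ITm.unwrap with hW1
  set W2 := vs2.map ITm.unwrap with hW2
  have hlen1 : W1.length = vs1.length := by rw [hW1, List.length_map]
  have hlen2 : W2.length = vs2.length := by rw [hW2, List.length_map]
  intro t
  induction t using ITm.indOn with
  | hv i =>
    intro _ hfb
    have hik : i < vs1.length + vs2.length := by cases hfb with | var h => exact h
    rw [ITm.isubst_var, if_pos (by simpa using hik)]
    rw [ITm.unwrap_var, STm.substList_def, STm.substList_def, STm.subst_var]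
    by_cases hi1 : i < vs1.length
    · rw [List.getD_append _ _ _ _ hi1]
      have hs1 : STm.sig W1 i = (vs1.getD i default).unwrap := by
        unfold STm.sig
        rw [if_pos (by omega), hW1, getD_map' _ _ _ hi1]
      rw [hs1]
      have hmem := getD_mem' vs1 i hi1
      obtain ⟨_, hwv, hfv⟩ := h1 _ hmem
      exact (STm.subst_closed (unwrap_fb _ hwv hfv) (fun j hj => by omega)).symm
    · rw [List.getD_append_right _ _ _ _ (by omega)]
      have hs1 : STm.sig W1 i = .var (i - vs1.length) := by
        unfold STm.sig
        rw [if_neg (by omega), hlen1]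
      rw [hs1, STm.subst_var]
      have hs2 : STm.sig W2 (i - vs1.length) = (vs2.getD (i - vs1.length) default).unwrap := by
        unfold STm.sig
        rw [if_pos (by omega), hW2, getD_map' _ _ _ (by omega)]
      rw [hs2]
  | ha t u iht ihu =>
    intro hwf hfb
    cases hwf with | app hwt hwu =>
    cases hfb with | app hft hfu =>
    rw [ITm.isubst_app, ITm.unwrap_app, ITm.unwrap_app, iht hwt hft, ihu hwu hfu]
    simp only [STm.substList_def, STm.subst_app]
  | hp i t ih =>
    intro hwf hfb
    cases hwf with | proj hwt =>
    cases hfb with | proj hft =>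
    rw [ITm.isubst_proj, ITm.unwrap_proj, ITm.unwrap_proj, ih hwt hft]
    simp only [STm.substList_def, STm.subst_proj]
  | ht ts ih =>
    intro hwf hfb
    cases hwf with | tup hwt =>
    cases hfb with | tup hft =>
    rw [ITm.isubst_tup, ITm.unwrap_tup, ITm.unwrap_tup]
    simp only [STm.substList_def, STm.subst_tup, List.map_map]
    refine congrArg STm.tup (List.map_congr_left fun a ha => ?_)
    have := ih a ha (hwt a ha) (hft a ha)
    simpa [STm.substList_def, Function.comp] using this
  | hc n m body bag ihb ihbag =>
    intro hwf hfb
    obtain ⟨hlen, hfbody, hwfb, hwfbody⟩ := IWF_clo_inv hwf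
    have hbagfb : ∀ b ∈ bag, IFB (vs1.length + vs2.length) b := by
      cases hfb with | clo h _ => exact h
    rw [ITm.isubst_clo, ITm.unwrap_clo, ITm.unwrap_clo]
    rw [STm.substList_def, STm.substList_def, STm.subst_lam, STm.subst_lam]
    congr 1
    rw [STm.subst_subst, STm.subst_subst]
    have hsfb : SFB (m + n) body.unwrap := by
      have := unwrap_fb body hwfbody hfbody
      rwa [Nat.add_comm] at this
    refine STm.subst_eq_on hsfb fun i hi => ?_
    have hcomp : (fun j => (STm.lift m (STm.sig W1) j).subst (STm.lift m (STm.sig W2)))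
        = STm.lift m (fun j => (STm.sig W1 j).subst (STm.sig W2)) := by
      funext j
      by_cases hj : j < m
      · simp only [STm.lift, if_pos hj, STm.subst_var]
      · simp only [STm.lift, if_neg hj]
        exact STm.shift_subst _ _ _
    by_cases h1m : i < m
    · simp only [ITm.cloSig, if_pos h1m, STm.subst_var, STm.lift]
    · have h2m : i < m + n := hi
      simp only [ITm.cloSig, if_neg h1m, if_pos h2m]
      have hb : i - m < bag.length := by omega
      rw [List.map_map, getD_map' _ _ _ hb, getD_map' _ _ _ hb]
      have hbmem : bag.getD (i - m) default ∈ bag := getD_mem' bag (i - m) hb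
      rw [Function.comp_apply,
        ihbag _ hbmem (hwfb _ hbmem) (hbagfb _ hbmem),
        STm.substList_def, STm.substList_def, hcomp, STm.shift_subst, STm.subst_subst]

/-- Commutation of simultaneous substitution and unwrapping: for a well-formed
λ_int term `t` with fv(t) ⊆ x̄ ∪ ȳ (x̄ the indices `0..|vs1|-1`, ȳ the indices
`|vs1|..|vs1|+|vs2|-1`), and (well-formed, closed) value tuples `vs1`, `vs2`,
`⌊t[x̄:=v̄₁, ȳ:=v̄₂]⌋ = ⌊t⌋[x̄:=⌊v̄₁⌋][ȳ:=⌊v̄₂⌋]`. -/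
theorem unwrap_subst_commute (t : ITm) (vs1 vs2 : List ITm)
    (hwf : IWF t) (hfb : IFB (vs1.length + vs2.length) t)
    (h1 : ∀ v ∈ vs1, IVal v ∧ IWF v ∧ IFB 0 v)
    (h2 : ∀ v ∈ vs2, IVal v ∧ IWF v ∧ IFB 0 v) :
    (ITm.isubst (vs1 ++ vs2) t).unwrap
      = STm.substList (vs2.map ITm.unwrap)
          (STm.substList (vs1.map ITm.unwrap) t.unwrap) := by
  exact unwrap_subst_commute_aux vs1 vs2 h1 h2 t hwf hfb

end CC
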